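/- Let Q* : S × A × B → ℝ satisfy Q* = F Q* and let Q : S × A × B → ℝ be arbitrary. Let μ : S × A → B satisfy that μ(s,a) minimizes b ↦ Q(s,a,b) for every (s,a), and let π : S → A satisfy that π(s) maximizes a ↦ Q*(s,a,μ(s,a)) for every s. Then for every (s,a,b) ∈ S × A × B: (F Q)(s,a,b) − Q*(s,a,b) ≥ γ · Σ_{s'∈S} P(s'|s,a,b) · ( Q(s', π(s'), μ(s', π(s'))) − Q*(s', π(s'), μ(s', π(s'))) ). -/

import Mathlib

/-- The minimax optimal Bellman operator for a two-player zero-sum Markov game. -/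
noncomputable def minimaxBellman {S A B : Type*} [Fintype S] [Fintype A] [Fintype B]
    [Nonempty A] [Nonempty B] (P : S × A × B → S → ℝ) (R : S × A × B → ℝ) (γ : ℝ)
    (Q : S × A × B → ℝ) : S × A × B → ℝ := fun x =>
  R x + γ * ∑ s' : S, P x s' *
    (Finset.univ.sup' Finset.univ_nonempty fun a' : A =>
      Finset.univ.inf' Finset.univ_nonempty fun b' : B => Q (s', a', b'))

/-!
The minimising response `μ` makes `Q (s', π s', μ (s', π s'))` a lower bound for the max-min value
of `Q` at `s'`, while the maximising `π` makes `Qstar (s', π s', μ (s', π s'))` an upper bound for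
the max-min value of `Qstar` at `s'`. Since `Qstar` is a fixed point, `F Q - Qstar = F Q - F Qstar`
is `γ` times the `P`-average of the difference of the max-min values, and the bound follows
because `P ≥ 0` and `γ ≥ 0`.
-/

open Finset

section MaxMin

variable {A B α : Type*} [Fintype A] [Fintype B] [Nonempty A] [Nonempty B] [LinearOrder α]

noncomputable def maxMin (f : A → B → α) : α :=
  univ.sup' univ_nonempty fun a => univ.inf' univ_nonempty (f a)

theorem le_maxMin {f : A → B → α} {a : A} {b₀ : B} (h : ∀ b, f a b₀ ≤ f a b) :
    f a b₀ ≤ maxMin f :=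
  (le_inf' _ _ fun b _ => h b).trans <|
    le_sup' (fun a => univ.inf' univ_nonempty (f a)) (mem_univ a)

theorem maxMin_le {f : A → B → α} (μ : A → B) {a₀ : A} (h : ∀ a, f a (μ a) ≤ f a₀ (μ a₀)) :
    maxMin f ≤ f a₀ (μ a₀) :=
  sup'_le _ _ fun a _ => (inf'_le _ (mem_univ (μ a))).trans (h a)

end MaxMin

section Bellman

variable {S A B : Type*} [Fintype S] [Fintype A] [Fintype B] [Nonempty A] [Nonempty B]

theorem minimaxBellman_sub_minimaxBellman (P : S × A × B → S → ℝ) (R : S × A × B → ℝ) (γ : ℝ)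
    (Q Q' : S × A × B → ℝ) (x : S × A × B) :
    minimaxBellman P R γ Q x - minimaxBellman P R γ Q' x =
      γ * ∑ s', P x s' *
        (maxMin (fun a b => Q (s', a, b)) - maxMin (fun a b => Q' (s', a, b))) := by
  simp only [minimaxBellman, maxMin, mul_sub, sum_sub_distrib]
  ring

end Bellman

theorem bellman_lower_bound_general {S A B : Type*}
    [Fintype S] [Fintype A] [Fintype B] [Nonempty A] [Nonempty B]
    (P : S × A × B → S → ℝ) (hP0 : ∀ x s', 0 ≤ P x s')
    (R : S × A × B → ℝ) (γ : ℝ) (hγ0 : 0 ≤ γ)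
    (Qstar : S × A × B → ℝ) (hQstar : minimaxBellman P R γ Qstar = Qstar)
    (Q : S × A × B → ℝ)
    (μ : S × A → B) (hμ : ∀ s a b, Q (s, a, μ (s, a)) ≤ Q (s, a, b))
    (π : S → A) (hπ : ∀ s a, Qstar (s, a, μ (s, a)) ≤ Qstar (s, π s, μ (s, π s))) :
    ∀ x : S × A × B,
      γ * ∑ s' : S, P x s' *
        (Q (s', π s', μ (s', π s')) - Qstar (s', π s', μ (s', π s')))
      ≤ minimaxBellman P R γ Q x - Qstar x := by
  intro x
  calc γ * ∑ s' : S, P x s' *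
        (Q (s', π s', μ (s', π s')) - Qstar (s', π s', μ (s', π s')))
      ≤ γ * ∑ s', P x s' *
          (maxMin (fun a b => Q (s', a, b)) - maxMin (fun a b => Qstar (s', a, b))) := by
        gcongr with s'
        · exact hP0 x s'
        · exact le_maxMin (f := fun a b => Q (s', a, b)) (hμ s' (π s'))
        · exact maxMin_le (fun a => μ (s', a)) (hπ s')
    _ = minimaxBellman P R γ Q x - minimaxBellman P R γ Qstar x :=
        (minimaxBellman_sub_minimaxBellman P R γ Q Qstar x).symm
    _ = minimaxBellman P R γ Q x - Qstar x := by rw [hQstar]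

theorem bellman_lower_bound {S A B : Type*}
    [Fintype S] [Fintype A] [Fintype B] [Nonempty S] [Nonempty A] [Nonempty B]
    (P : S × A × B → S → ℝ) (hP0 : ∀ x s', 0 ≤ P x s') (hP1 : ∀ x, ∑ s' : S, P x s' = 1)
    (R : S × A × B → ℝ) (γ : ℝ) (hγ0 : 0 ≤ γ) (hγ1 : γ < 1)
    (Qstar : S × A × B → ℝ) (hQstar : minimaxBellman P R γ Qstar = Qstar)
    (Q : S × A × B → ℝ)
    (μ : S × A → B) (hμ : ∀ s a b, Q (s, a, μ (s, a)) ≤ Q (s, a, b))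
    (π : S → A) (hπ : ∀ s a, Qstar (s, a, μ (s, a)) ≤ Qstar (s, π s, μ (s, π s))) :
    ∀ x : S × A × B,
      γ * ∑ s' : S, P x s' *
        (Q (s', π s', μ (s', π s')) - Qstar (s', π s', μ (s', π s')))
      ≤ minimaxBellman P R γ Q x - Qstar x :=
  bellman_lower_bound_general P hP0 R γ hγ0 Qstar hQstar Q μ hμ π hπ
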